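/- arXiv:1311.5069 — 2 statements merged into one kernel-verified Lean document; each statement's English description precedes it below -/
import Mathlib

section
/- Let D = diag(λ₁,…,λₙ) be a diagonal n×n complex matrix with λ_k > 0 for all k and Σ_{k=1}^n λ_k = 1, let f ∈ F_op, and let A⁽¹⁾,…,A⁽ᴺ⁾ be Hermitian n×n complex matrices. Then det(Cov_D) ≥ det(qCov^{as}_{D,f}), where Cov_D = Cov_{D,g_cl} and qCov^{as}_{D,f} = Cov_{D,g_f^{as}}. -/
open ComplexOrder Matrix

/-- The diagonal density matrix `D = diag(λ₁,…,λₙ)`. -/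
noncomputable def Dmat {n : ℕ} (lam : Fin n → ℝ) : Matrix (Fin n) (Fin n) ℂ :=
  Matrix.diagonal fun k => (lam k : ℂ)

/-- `A₀ = A - Tr(D A)·I`. -/
noncomputable def cent {n : ℕ} (lam : Fin n → ℝ) (A : Matrix (Fin n) (Fin n) ℂ) :
    Matrix (Fin n) (Fin n) ℂ :=
  A - (Dmat lam * A).trace • (1 : Matrix (Fin n) (Fin n) ℂ)

/-- The `N×N` covariance matrix `[Cov_{D,g}]_{ij} = (A⁽ⁱ⁾₀, A⁽ʲ⁾₀)_{D,g}` where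
`(A,B)_{D,g} = Σ_{k,l} A_{lk}·B_{kl}·g(λ_k,λ_l)`. -/
noncomputable def covM {n N : ℕ} (lam : Fin n → ℝ) (g : ℝ → ℝ → ℝ)
    (A : Fin N → Matrix (Fin n) (Fin n) ℂ) : Matrix (Fin N) (Fin N) ℂ :=
  Matrix.of fun i j =>
    ∑ k, ∑ l, (g (lam k) (lam l) : ℂ) * cent lam (A i) l k * cent lam (A j) k l
/-- `f ∈ F_op`: `f : (0,∞) → (0,∞)` is operator monotone (via the continuous functional
calculus on Hermitian matrices, with the Loewner order expressed through `PosSemidef`),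
satisfies `f(x) = x·f(1/x)` for `x > 0`, and `f(1) = 1`. -/
structure IsFop (f : ℝ → ℝ) : Prop where
  pos : ∀ x : ℝ, 0 < x → 0 < f x
  opMono : ∀ (m : ℕ) (X Y : Matrix (Fin m) (Fin m) ℂ), X.PosSemidef → Y.PosSemidef →
    (Y - X).PosSemidef → (cfc f Y - cfc f X).PosSemidef
  funcEq : ∀ x : ℝ, 0 < x → f x = x * f x⁻¹
  normalized : f 1 = 1

/-- `f(0) = lim_{t→0⁺} f(t)`. -/
def IsFzero (f : ℝ → ℝ) (f0 : ℝ) : Prop :=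
  Filter.Tendsto f (nhdsWithin 0 (Set.Ioi 0)) (nhds f0)

/-- `m_f(x,y) = y·f(x/y)`. -/
noncomputable def mfun (f : ℝ → ℝ) (x y : ℝ) : ℝ := y * f (x / y)

/-- `g_cl(x,y) = (x+y)/2`. -/
noncomputable def gcl (x y : ℝ) : ℝ := (x + y) / 2

/-- `g_f^{as}(x,y) = f(0)·(x−y)²/(2·m_f(x,y))`. -/
noncomputable def gas (f : ℝ → ℝ) (f0 : ℝ) (x y : ℝ) : ℝ :=
  f0 * (x - y) ^ 2 / (2 * mfun f x y)

/-- `g_f^{s}(x,y) = f(0)·(x+y)²/(2·m_f(x,y))`. -/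
noncomputable def gs (f : ℝ → ℝ) (f0 : ℝ) (x y : ℝ) : ℝ :=
  f0 * (x + y) ^ 2 / (2 * mfun f x y)

/-!
Both covariance matrices are sums `∑_{k,l} g(λ_k, λ_l) • v_{kl} v_{kl}ᴴ` of rank-one positive
semidefinite matrices, with `v_{kl} = ((A⁽ᵃ⁾₀)_{lk})_a`. Hence the pointwise bounds
`0 ≤ g_f^{as} ≤ g_cl` give `0 ≤ qCov^{as}_{D,f} ≤ Cov_D` in the Loewner order, and the
determinant is monotone on positive semidefinite matrices. The pointwise bound comes from
`m_f(x,y) ≥ f(0)·max(x,y)`, a consequence of the monotonicity of `f` and the symmetry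
`m_f(x,y) = m_f(y,x)`, together with `(x - y)² ≤ max(x,y)·(x + y)`.
-/

namespace Matrix

variable {𝕜 n : Type*} [RCLike 𝕜] [Fintype n] [DecidableEq n]

theorem posSemidef_algebraMap {x : ℝ} (hx : 0 ≤ x) :
    (algebraMap ℝ (Matrix n n 𝕜) x).PosSemidef := by
  rw [algebraMap_eq_diagonal]
  exact posSemidef_diagonal_iff.mpr fun _ => RCLike.ofReal_nonneg.mpr hx

theorem det_conjStarAlgAut (U : unitaryGroup n 𝕜) (X : Matrix n n 𝕜) :
    (Unitary.conjStarAlgAut 𝕜 _ U X).det = X.det := by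
  rw [Unitary.conjStarAlgAut_apply, det_mul, det_mul, mul_right_comm, ← det_mul,
    Unitary.mul_star_self_of_mem U.prop, det_one, one_mul]

theorem PosSemidef.one_le_det_one_add {M : Matrix n n 𝕜} (hM : M.PosSemidef) :
    1 ≤ (1 + M).det := by
  have hdiag : 1 + M = Unitary.conjStarAlgAut 𝕜 _ hM.1.eigenvectorUnitary
      (1 + diagonal (RCLike.ofReal ∘ hM.1.eigenvalues)) := by
    rw [map_add, map_one, ← hM.1.spectral_theorem]
  rw [hdiag, det_conjStarAlgAut, ← diagonal_one, diagonal_add, det_diagonal]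
  exact Finset.one_le_prod fun i _ =>
    le_add_of_nonneg_right (RCLike.ofReal_nonneg.mpr (hM.eigenvalues_nonneg i))

open scoped MatrixOrder in
theorem PosSemidef.det_le_det {P Q : Matrix n n 𝕜} (hP : P.PosSemidef)
    (hPQ : (Q - P).PosSemidef) : P.det ≤ Q.det := by
  by_cases hdet : P.det = 0
  · simpa [hdet] using (hP.add hPQ).det_nonneg
  set S := CFC.sqrt P
  have hSS : S * S = P := CFC.sqrt_mul_sqrt_self P hP.nonneg
  have hSdet : IsUnit S.det := by
    refine isUnit_iff_ne_zero.mpr fun h => hdet ?_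
    rw [← hSS, det_mul, h, zero_mul]
  set M := S⁻¹ * (Q - P) * S⁻¹
  have hM : M.PosSemidef := by
    have hSinv : S⁻¹ᴴ = S⁻¹ := (CFC.sqrt_nonneg P).posSemidef.1.inv
    simpa only [hSinv] using hPQ.mul_mul_conjTranspose_same S⁻¹
  have hQ : S * (1 + M) * S = Q := by
    simp only [M, mul_add, add_mul, mul_one, hSS, ← mul_assoc, mul_nonsing_inv S hSdet, one_mul]
    rw [mul_assoc, nonsing_inv_mul S hSdet, mul_one, add_sub_cancel]
  calc P.det = P.det * 1 := (mul_one _).symm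
    _ ≤ P.det * (1 + M).det := mul_le_mul_of_nonneg_left hM.one_le_det_one_add hP.det_nonneg
    _ = Q.det := by rw [← hQ, ← hSS, det_mul, det_mul, det_mul]; ring

end Matrix

theorem sq_sub_le_max_mul_add {x y : ℝ} (hx : 0 ≤ x) (hy : 0 ≤ y) :
    (x - y) ^ 2 ≤ max x y * (x + y) := by
  rcases le_total x y with h | h
  · rw [max_eq_right h]; nlinarith
  · rw [max_eq_left h]; nlinarith

namespace IsFop

variable {f : ℝ → ℝ} (hf : IsFop f)
include hf

theorem monotoneOn : MonotoneOn f (Set.Ici 0) := by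
  intro x hx y hy hxy
  have h := hf.opMono 1 _ _ (posSemidef_algebraMap hx) (posSemidef_algebraMap hy)
    (by rw [← map_sub]; exact posSemidef_algebraMap (sub_nonneg.mpr hxy))
  rw [cfc_algebraMap, cfc_algebraMap, ← map_sub] at h
  simpa [algebraMap_eq_diagonal] using h.diag_nonneg (i := 0)

theorem mfun_comm {x y : ℝ} (hx : 0 < x) (hy : 0 < y) : mfun f x y = mfun f y x := by
  rw [mfun, mfun, hf.funcEq _ (div_pos hx hy), inv_div]
  field_simp

theorem mfun_pos {x y : ℝ} (hx : 0 < x) (hy : 0 < y) : 0 < mfun f x y :=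
  mul_pos hy (hf.pos _ (div_pos hx hy))

variable {f0 : ℝ} (hf0 : IsFzero f f0)
include hf0

theorem nonneg_of_isFzero : 0 ≤ f0 :=
  ge_of_tendsto hf0 (eventually_nhdsWithin_of_forall fun _ ht => (hf.pos _ ht).le)

theorem le_of_isFzero {s : ℝ} (hs : 0 < s) : f0 ≤ f s :=
  le_of_tendsto hf0 <| by
    filter_upwards [self_mem_nhdsWithin, nhdsWithin_le_nhds (eventually_lt_nhds hs)] with t ht hts
    exact hf.monotoneOn (Set.mem_Ici.mpr (le_of_lt ht)) (Set.mem_Ici.mpr hs.le) hts.le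

theorem mul_max_le_mfun {x y : ℝ} (hx : 0 < x) (hy : 0 < y) : f0 * max x y ≤ mfun f x y := by
  have hle {x y : ℝ} (hx : 0 < x) (hy : 0 < y) : f0 * y ≤ mfun f x y := by
    rw [mfun, mul_comm]
    exact mul_le_mul_of_nonneg_left (hf.le_of_isFzero hf0 (div_pos hx hy)) hy.le
  rcases le_total x y with h | h
  · rw [max_eq_right h]; exact hle hx hy
  · rw [max_eq_left h, hf.mfun_comm hx hy]; exact hle hy hx

theorem gas_nonneg {x y : ℝ} (hx : 0 < x) (hy : 0 < y) : 0 ≤ gas f f0 x y :=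
  div_nonneg (mul_nonneg (hf.nonneg_of_isFzero hf0) (sq_nonneg _))
    (mul_pos two_pos (hf.mfun_pos hx hy)).le

theorem gas_le_gcl {x y : ℝ} (hx : 0 < x) (hy : 0 < y) : gas f f0 x y ≤ gcl x y := by
  rw [gas, gcl, div_le_div_iff₀ (mul_pos two_pos (hf.mfun_pos hx hy)) two_pos]
  calc f0 * (x - y) ^ 2 * 2 ≤ f0 * (max x y * (x + y)) * 2 := by
        gcongr
        · exact hf.nonneg_of_isFzero hf0
        · exact sq_sub_le_max_mul_add hx.le hy.le
    _ ≤ mfun f x y * (x + y) * 2 := by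
        rw [← mul_assoc]; gcongr; exact hf.mul_max_le_mfun hf0 hx hy
    _ = (x + y) * (2 * mfun f x y) := by ring

end IsFop

section Covariance

variable {n N : ℕ} (lam : Fin n → ℝ)

theorem isHermitian_Dmat : (Dmat lam).IsHermitian :=
  isHermitian_diagonal_of_self_adjoint _ (funext fun k => Complex.conj_ofReal (lam k))

theorem isHermitian_cent {A : Matrix (Fin n) (Fin n) ℂ} (hA : A.IsHermitian) :
    (cent lam A).IsHermitian := by
  have htr : IsSelfAdjoint (Dmat lam * A).trace := by
    rw [IsSelfAdjoint, ← trace_conjTranspose, conjTranspose_mul, hA.eq, (isHermitian_Dmat lam).eq,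
      trace_mul_comm]
  exact hA.sub (htr.smul isHermitian_one)

theorem covM_eq_sum (g : ℝ → ℝ → ℝ) {A : Fin N → Matrix (Fin n) (Fin n) ℂ}
    (hA : ∀ a, (A a).IsHermitian) :
    covM lam g A = ∑ p : Fin n × Fin n, g (lam p.1) (lam p.2) •
      vecMulVec (fun a => cent lam (A a) p.2 p.1) (star fun a => cent lam (A a) p.2 p.1) := by
  ext i j
  rw [Matrix.sum_apply, covM, of_apply, ← Finset.sum_product']
  refine Finset.sum_congr rfl fun p _ => ?_
  rw [Matrix.smul_apply, vecMulVec_apply, Pi.star_apply,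
    ← (isHermitian_cent lam (hA j)).apply p.1 p.2, Complex.real_smul, mul_assoc]

theorem covM_posSemidef {g : ℝ → ℝ → ℝ} (hg : ∀ k l, 0 ≤ g (lam k) (lam l))
    {A : Fin N → Matrix (Fin n) (Fin n) ℂ} (hA : ∀ a, (A a).IsHermitian) :
    (covM lam g A).PosSemidef := by
  rw [covM_eq_sum lam g hA]
  exact posSemidef_sum _ fun p _ => (posSemidef_vecMulVec_self_star _).smul (hg _ _)

theorem covM_sub (g₁ g₂ : ℝ → ℝ → ℝ) (A : Fin N → Matrix (Fin n) (Fin n) ℂ) :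
    covM lam g₁ A - covM lam g₂ A = covM lam (g₁ - g₂) A := by
  ext i j
  simp only [covM, Matrix.sub_apply, of_apply, ← Finset.sum_sub_distrib, Pi.sub_apply,
    Complex.ofReal_sub, sub_mul]

end Covariance

theorem det_cov_ge_det_qCov_as_general (n N : ℕ) (lam : Fin n → ℝ)
    (hlam : ∀ k, 0 < lam k)
    (f : ℝ → ℝ) (hf : IsFop f) (f0 : ℝ) (hf0 : IsFzero f f0)
    (A : Fin N → Matrix (Fin n) (Fin n) ℂ) (hA : ∀ a, (A a).IsHermitian) :
    (covM lam (gas f f0) A).det.re ≤ (covM lam gcl A).det.re := by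
  have hqCov : (covM lam (gas f f0) A).PosSemidef :=
    covM_posSemidef lam (fun k l => hf.gas_nonneg hf0 (hlam k) (hlam l)) hA
  have hdiff : (covM lam gcl A - covM lam (gas f f0) A).PosSemidef := by
    rw [covM_sub]
    refine covM_posSemidef lam (fun k l => ?_) hA
    exact sub_nonneg.mpr (hf.gas_le_gcl hf0 (hlam k) (hlam l))
  exact (Complex.le_def.mp (hqCov.det_le_det hdiff)).1

/-- `det(Cov_D) ≥ det(qCov^{as}_{D,f})`. -/
theorem det_cov_ge_det_qCov_as (n N : ℕ) (lam : Fin n → ℝ)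
    (hlam : ∀ k, 0 < lam k) (hsum : ∑ k, lam k = 1)
    (f : ℝ → ℝ) (hf : IsFop f) (f0 : ℝ) (hf0 : IsFzero f f0)
    (A : Fin N → Matrix (Fin n) (Fin n) ℂ) (hA : ∀ a, (A a).IsHermitian) :
    (covM lam (gas f f0) A).det.re ≤ (covM lam gcl A).det.re :=
  det_cov_ge_det_qCov_as_general n N lam hlam f hf f0 hf0 A hA
end

section
/- Let D = diag(λ₁,…,λₙ) be a diagonal n×n complex matrix with λ_k > 0 for all k and Σ_{k=1}^n λ_k = 1, let f₁, f₂ ∈ F_op satisfy f₁(0)/f₁(t) ≥ f₂(0)/f₂(t) for all t > 0, and let A⁽¹⁾,…,A⁽ᴺ⁾ be Hermitian n×n complex matrices. Then det(qCov^{as}_{D,f₁}) ≥ det(qCov^{as}_{D,f₂}), where qCov^{as}_{D,f} = Cov_{D,g_f^{as}}. -/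
open ComplexOrder Matrix

/-!
Since `g_f^{as}(x, y) = (x - y)² / (2y) · f(0) / f(x / y)`, the hypothesis gives
`0 ≤ g_{f₂}^{as} ≤ g_{f₁}^{as}` at every pair of eigenvalues of `D`. For Hermitian `Bᵢ` and
nonnegative weights `w`, the matrix `[Σ_{k,l} w_{kl} (Bᵢ)_{lk} (Bⱼ)_{kl}]` is a nonnegative
combination of the rank-one positive semidefinite matrices `v̄ vᵀ` with `vᵢ = (Bᵢ)_{kl}`.
Hence `0 ≤ qCov^{as}_{D,f₂} ≤ qCov^{as}_{D,f₁}` in the Loewner order, and the determinant is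
monotone on positive semidefinite matrices: for `0 ≤ B = Xᴴ X ≤ A` with `X` invertible,
`A = Xᴴ (1 + Q) X` with `Q ≥ 0`, and `det (1 + Q) ≥ 1`.
-/

namespace Matrix

variable {𝕜 n ι : Type*} [RCLike 𝕜] [Fintype n]

section Determinant

variable [DecidableEq n]

theorem PosSemidef.one_le_det_one_add_s7 {Q : Matrix n n 𝕜} (hQ : Q.PosSemidef) :
    1 ≤ (1 + Q).det := by
  have hdiag : 1 + Q = Unitary.conjStarAlgAut 𝕜 _ hQ.1.eigenvectorUnitary
      (diagonal fun i => 1 + (hQ.1.eigenvalues i : 𝕜)) := by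
    conv_lhs => rw [hQ.1.spectral_theorem]
    rw [← map_one (Unitary.conjStarAlgAut 𝕜 _ hQ.1.eigenvectorUnitary), ← map_add,
      ← diagonal_one, diagonal_add]
    rfl
  rw [hdiag, Unitary.conjStarAlgAut_apply, det_mul_comm, ← Matrix.mul_assoc]
  simp only [SetLike.coe_mem, Unitary.star_mul_self_of_mem, one_mul, det_diagonal]
  exact Finset.one_le_prod fun i _ =>
    le_add_of_nonneg_right (by exact_mod_cast hQ.eigenvalues_nonneg i)

open scoped MatrixOrder in
theorem PosSemidef.det_le_det_s7 {A B : Matrix n n 𝕜} (hB : B.PosSemidef)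
    (hAB : (A - B).PosSemidef) : B.det ≤ A.det := by
  by_cases hBdet : B.det = 0
  · simpa [hBdet] using (hB.add hAB).det_nonneg
  obtain ⟨X, rfl⟩ := CStarAlgebra.nonneg_iff_eq_star_mul_self.mp hB.nonneg
  rw [star_eq_conjTranspose, det_mul] at hBdet ⊢
  have hX : IsUnit X.det := isUnit_iff_ne_zero.mpr (right_ne_zero_of_mul hBdet)
  set Q := X⁻¹ᴴ * (A - Xᴴ * X) * X⁻¹
  have hQ : Q.PosSemidef := hAB.conjTranspose_mul_mul_same X⁻¹
  have hAQ : A = Xᴴ * (1 + Q) * X := by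
    simp only [Q, Matrix.mul_add, Matrix.add_mul, mul_one, ← Matrix.mul_assoc,
      ← conjTranspose_mul]
    rw [Matrix.mul_assoc _ X⁻¹, nonsing_inv_mul X hX, mul_one, conjTranspose_one, one_mul,
      add_sub_cancel]
  have hdet : 0 ≤ Xᴴ.det * X.det := by
    simpa only [det_mul] using (posSemidef_conjTranspose_mul_self X).det_nonneg
  calc Xᴴ.det * X.det ≤ Xᴴ.det * X.det * (1 + Q).det :=
        le_mul_of_one_le_right hdet hQ.one_le_det_one_add_s7
    _ = A.det := by rw [hAQ, det_mul, det_mul]; ring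

end Determinant

def pairingMatrix (w : n → n → ℝ) (B : ι → Matrix n n 𝕜) : Matrix ι ι 𝕜 :=
  of fun i j => ∑ k, ∑ l, (w k l : 𝕜) * B i l k * B j k l

theorem pairingMatrix_sub (w₁ w₂ : n → n → ℝ) (B : ι → Matrix n n 𝕜) :
    pairingMatrix w₁ B - pairingMatrix w₂ B = pairingMatrix (w₁ - w₂) B := by
  ext i j
  simp only [pairingMatrix, sub_apply, of_apply, ← Finset.sum_sub_distrib, Pi.sub_apply,
    RCLike.ofReal_sub, sub_mul]

theorem pairingMatrix_eq_sum_vecMulVec {B : ι → Matrix n n 𝕜} (hB : ∀ i, (B i).IsHermitian)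
    (w : n → n → ℝ) :
    pairingMatrix w B =
      ∑ k, ∑ l, w k l • vecMulVec (star fun i => B i k l) (fun i => B i k l) := by
  ext i j
  simp only [pairingMatrix, of_apply, sum_apply, smul_apply, vecMulVec_apply, Pi.star_apply,
    (hB i).apply, RCLike.real_smul_eq_coe_mul, mul_assoc]

theorem posSemidef_pairingMatrix [Fintype ι] {w : n → n → ℝ} (hw : ∀ k l, 0 ≤ w k l)
    {B : ι → Matrix n n 𝕜} (hB : ∀ i, (B i).IsHermitian) : (pairingMatrix w B).PosSemidef := by
  rw [pairingMatrix_eq_sum_vecMulVec hB]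
  exact posSemidef_sum _ fun k _ => posSemidef_sum _ fun l _ =>
    (posSemidef_vecMulVec_star_self _).smul (hw k l)

end Matrix

theorem cent_isHermitian {n : ℕ} (lam : Fin n → ℝ) {A : Matrix (Fin n) (Fin n) ℂ}
    (hA : A.IsHermitian) : (cent lam A).IsHermitian := by
  have hD : (Dmat lam).IsHermitian :=
    isHermitian_diagonal_of_self_adjoint _ (funext fun k => Complex.conj_ofReal (lam k))
  have htrace : IsSelfAdjoint (Dmat lam * A).trace := by
    rw [IsSelfAdjoint, ← trace_conjTranspose, conjTranspose_mul, hA.eq, hD.eq, trace_mul_comm]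
  exact hA.sub (isHermitian_one.smul htrace)

theorem covM_eq_pairingMatrix {n N : ℕ} (lam : Fin n → ℝ) (g : ℝ → ℝ → ℝ)
    (A : Fin N → Matrix (Fin n) (Fin n) ℂ) :
    covM lam g A = pairingMatrix (fun k l => g (lam k) (lam l)) (fun i => cent lam (A i)) :=
  rfl

theorem IsFzero.nonneg {f : ℝ → ℝ} {f0 : ℝ} (h : IsFzero f f0) (hf : ∀ x, 0 < x → 0 < f x) :
    0 ≤ f0 :=
  ge_of_tendsto h (eventually_mem_nhdsWithin.mono fun t ht => (hf t ht).le)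

theorem gas_eq_mul_div (f : ℝ → ℝ) (f0 x y : ℝ) :
    gas f f0 x y = (x - y) ^ 2 / (2 * y) * (f0 / f (x / y)) := by
  rw [gas, mfun, div_mul_div_comm, mul_comm f0, mul_assoc]

theorem gas_nonneg {f : ℝ → ℝ} {f0 : ℝ} (hf : ∀ x, 0 < x → 0 < f x) (hf0 : IsFzero f f0)
    {x y : ℝ} (hx : 0 < x) (hy : 0 < y) : 0 ≤ gas f f0 x y := by
  rw [gas_eq_mul_div]
  exact mul_nonneg (by positivity) (div_nonneg (hf0.nonneg hf) (hf _ (div_pos hx hy)).le)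

theorem gas_le_gas {f₁ f₂ : ℝ → ℝ} {f01 f02 : ℝ}
    (hff : ∀ t : ℝ, 0 < t → f02 / f₂ t ≤ f01 / f₁ t) {x y : ℝ} (hx : 0 < x) (hy : 0 < y) :
    gas f₂ f02 x y ≤ gas f₁ f01 x y := by
  rw [gas_eq_mul_div, gas_eq_mul_div]
  exact mul_le_mul_of_nonneg_left (hff _ (div_pos hx hy)) (by positivity)

theorem det_qCov_as_ge_det_qCov_as_general (n N : ℕ) (lam : Fin n → ℝ)
    (hlam : ∀ k, 0 < lam k)
    (f₁ f₂ : ℝ → ℝ) (hf₂ : IsFop f₂)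
    (f01 f02 : ℝ) (hf02 : IsFzero f₂ f02)
    (hff : ∀ t : ℝ, 0 < t → f02 / f₂ t ≤ f01 / f₁ t)
    (A : Fin N → Matrix (Fin n) (Fin n) ℂ) (hA : ∀ a, (A a).IsHermitian) :
    (covM lam (gas f₂ f02) A).det.re ≤ (covM lam (gas f₁ f01) A).det.re := by
  have hcent : ∀ a, (cent lam (A a)).IsHermitian := fun a => cent_isHermitian lam (hA a)
  have hcov₂ : (covM lam (gas f₂ f02) A).PosSemidef :=
    posSemidef_pairingMatrix (fun k l => gas_nonneg hf₂.pos hf02 (hlam k) (hlam l)) hcent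
  have hdiff : (covM lam (gas f₁ f01) A - covM lam (gas f₂ f02) A).PosSemidef := by
    rw [covM_eq_pairingMatrix, covM_eq_pairingMatrix, pairingMatrix_sub]
    exact posSemidef_pairingMatrix
      (fun k l => sub_nonneg.mpr (gas_le_gas hff (hlam k) (hlam l))) hcent
  exact (Complex.le_def.mp (hcov₂.det_le_det_s7 hdiff)).1

/-- If `f₁(0)/f₁(t) ≥ f₂(0)/f₂(t)` for all `t > 0`, then `det(qCov^{as}_{D,f₁}) ≥ det(qCov^{as}_{D,f₂})`. -/
theorem det_qCov_as_ge_det_qCov_as (n N : ℕ) (lam : Fin n → ℝ)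
    (hlam : ∀ k, 0 < lam k) (hsum : ∑ k, lam k = 1)
    (f₁ f₂ : ℝ → ℝ) (hf₁ : IsFop f₁) (hf₂ : IsFop f₂)
    (f01 f02 : ℝ) (hf01 : IsFzero f₁ f01) (hf02 : IsFzero f₂ f02)
    (hff : ∀ t : ℝ, 0 < t → f02 / f₂ t ≤ f01 / f₁ t)
    (A : Fin N → Matrix (Fin n) (Fin n) ℂ) (hA : ∀ a, (A a).IsHermitian) :
    (covM lam (gas f₂ f02) A).det.re ≤ (covM lam (gas f₁ f01) A).det.re :=
  det_qCov_as_ge_det_qCov_as_general n N lam hlam f₁ f₂ hf₂ f01 f02 hf02 hff A hA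
end
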